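/- arXiv:1805.09038 — 2 statements merged into one kernel-verified Lean document; each statement's English description precedes it below -/
import Mathlib

section
/- Let Σ be a positive-definite n×n matrix, H an n×p full-rank matrix with p < n, and W an n×(n−p) matrix with WᵀH = 0 and WᵀW = I_{n−p}. Then for every y ∈ ℝⁿ, yᵀ W (Wᵀ Σ W)⁻¹ Wᵀ y = yᵀ (Σ⁻¹ − Σ⁻¹H(HᵀΣ⁻¹H)⁻¹HᵀΣ⁻¹) y. -/
/-!
Both sides, `L = W (WᵀSW)⁻¹Wᵀ` and `K = S⁻¹ - S⁻¹H(HᵀS⁻¹H)⁻¹HᵀS⁻¹`, kill the columns of `H` and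
send `SW` to `W` (for `K` because `HᵀW = 0`). Since `WᵀH = 0` and `WᵀSW` is invertible, the block
matrix `[H | SW]` has injective, hence (by counting dimensions) surjective action, so it has a
right inverse and `L [H | SW] = K [H | SW]` forces `L = K`.
-/

open Matrix

namespace Matrix

variable {𝕜 : Type*} [Field 𝕜] {l m n k : Type*}

theorem mulVec_injective_of_rank_eq_card_width [Fintype n] {A : Matrix m n 𝕜}
    (hA : A.rank = Fintype.card n) : Function.Injective A.mulVec := by
  have hdim := A.mulVecLin.finrank_range_add_finrank_ker
  rw [← Matrix.rank, hA, Module.finrank_fintype_fun_eq_card] at hdim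
  exact LinearMap.ker_eq_bot.mp <| Submodule.finrank_eq_zero.mp
    (by omega : Module.finrank 𝕜 (LinearMap.ker A.mulVecLin) = 0)

theorem mulVec_injective_of_mul [Fintype m] [Fintype n] {A : Matrix l m 𝕜} {B : Matrix m n 𝕜}
    (hAB : Function.Injective (A * B).mulVec) : Function.Injective B.mulVec :=
  Function.Injective.of_comp (f := A.mulVec) fun v w h => hAB <| by
    simpa only [Function.comp_apply, mulVec_mulVec] using h

theorem mulVec_fromCols_injective [Fintype m] [Fintype n] [Fintype k] {A₁ : Matrix m n 𝕜}
    {A₂ : Matrix m k 𝕜} (C : Matrix l m 𝕜) (hCA₁ : C * A₁ = 0)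
    (hA₁ : Function.Injective A₁.mulVec) (hCA₂ : Function.Injective (C * A₂).mulVec) :
    Function.Injective (fromCols A₁ A₂).mulVec := by
  refine (injective_iff_map_eq_zero (fromCols A₁ A₂).mulVecLin).2 fun v hv => ?_
  rw [mulVecLin_apply, fromCols_mulVec] at hv
  have hv₂ : v ∘ Sum.inr = 0 := hCA₂ <| by
    have hCv := congrArg C.mulVec hv
    rwa [mulVec_add, mulVec_mulVec, mulVec_mulVec, hCA₁, zero_mulVec, zero_add, mulVec_zero,
      ← mulVec_zero (C * A₂)] at hCv
  have hv₁ : v ∘ Sum.inl = 0 := hA₁ <| by rwa [hv₂, mulVec_zero, add_zero, ← mulVec_zero A₁] at hv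
  ext (i | i)
  · exact congrFun hv₁ i
  · exact congrFun hv₂ i

theorem mulVec_surjective_of_injective_of_card_eq [Fintype m] [Fintype n] {A : Matrix m n 𝕜}
    (hA : Function.Injective A.mulVec) (hcard : Fintype.card n = Fintype.card m) :
    Function.Surjective A.mulVec :=
  (LinearMap.injective_iff_surjective_of_finrank_eq_finrank (f := A.mulVecLin)
    (by simp [hcard])).1 hA

theorem eq_of_mul_eq_mul_of_mulVec_surjective [Fintype m] [DecidableEq m] [Fintype n]
    {A B : Matrix l m 𝕜} {M : Matrix m n 𝕜} (hM : Function.Surjective M.mulVec)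
    (h : A * M = B * M) : A = B := by
  obtain ⟨N, hMN⟩ := mulVec_surjective_iff_exists_right_inverse.1 hM
  rw [← A.mul_one, ← B.mul_one, ← hMN, ← Matrix.mul_assoc, h, Matrix.mul_assoc]

theorem mul_inv_transpose_mul_mul_transpose_eq_inv_sub [Fintype m] [DecidableEq m] [Fintype n]
    [DecidableEq n] [Fintype k] [DecidableEq k]
    {S : Matrix m m 𝕜} {H : Matrix m n 𝕜} {W : Matrix m k 𝕜}
    (hS : IsUnit S) (hWSW : IsUnit (Wᵀ * S * W)) (hHSH : IsUnit (Hᵀ * S⁻¹ * H))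
    (hWH : Wᵀ * H = 0) (hcard : Fintype.card n + Fintype.card k = Fintype.card m) :
    W * (Wᵀ * S * W)⁻¹ * Wᵀ = S⁻¹ - S⁻¹ * H * (Hᵀ * S⁻¹ * H)⁻¹ * Hᵀ * S⁻¹ := by
  have hHW : Hᵀ * W = 0 := by rw [← transpose_transpose W, ← transpose_mul, hWH, transpose_zero]
  have hH : Function.Injective H.mulVec :=
    mulVec_injective_of_mul (A := Hᵀ * S⁻¹) (mulVec_injective_of_isUnit hHSH)
  have hSW : Function.Injective (Wᵀ * (S * W)).mulVec := by
    rw [← Matrix.mul_assoc]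
    exact mulVec_injective_of_isUnit hWSW
  have hWSW_det : IsUnit (Wᵀ * (S * W)).det := by
    rwa [← Matrix.mul_assoc, ← isUnit_iff_isUnit_det]
  have hHSH_det : IsUnit (Hᵀ * (S⁻¹ * H)).det := by
    rwa [← Matrix.mul_assoc, ← isUnit_iff_isUnit_det]
  have hLH : W * (Wᵀ * S * W)⁻¹ * Wᵀ * H = 0 := by
    simp only [Matrix.mul_assoc, hWH, Matrix.mul_zero]
  have hLSW : W * (Wᵀ * S * W)⁻¹ * Wᵀ * (S * W) = W := by
    simp only [Matrix.mul_assoc, nonsing_inv_mul _ hWSW_det, Matrix.mul_one]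
  have hKH : (S⁻¹ - S⁻¹ * H * (Hᵀ * S⁻¹ * H)⁻¹ * Hᵀ * S⁻¹) * H = 0 := by
    simp only [Matrix.sub_mul, Matrix.mul_assoc, nonsing_inv_mul _ hHSH_det, Matrix.mul_one,
      sub_self]
  have hKSW : (S⁻¹ - S⁻¹ * H * (Hᵀ * S⁻¹ * H)⁻¹ * Hᵀ * S⁻¹) * (S * W) = W := by
    simp only [Matrix.sub_mul, Matrix.mul_assoc, hHW, Matrix.mul_zero, sub_zero,
      nonsing_inv_mul_cancel_left _ _ ((isUnit_iff_isUnit_det S).1 hS)]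
  exact eq_of_mul_eq_mul_of_mulVec_surjective
    (mulVec_surjective_of_injective_of_card_eq (mulVec_fromCols_injective Wᵀ hWH hH hSW)
      (by rw [Fintype.card_sum, hcard])) (by rw [mul_fromCols, mul_fromCols, hLH, hLSW, hKH, hKSW])

end Matrix

theorem stmt_9_general {n p : ℕ}
    (S : Matrix (Fin n) (Fin n) ℝ) (hS : S.PosDef)
    (H : Matrix (Fin n) (Fin p) ℝ) (hH : H.rank = p)
    (W : Matrix (Fin n) (Fin (n - p)) ℝ)
    (hWH : Wᵀ * H = 0) (hWW : Wᵀ * W = 1)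
    (y : Fin n → ℝ) :
    y ⬝ᵥ (W * (Wᵀ * S * W)⁻¹ * Wᵀ).mulVec y
      = y ⬝ᵥ (S⁻¹ - S⁻¹ * H * (Hᵀ * S⁻¹ * H)⁻¹ * Hᵀ * S⁻¹).mulVec y := by
  have hpn : p ≤ n := hH ▸ H.rank_le_height
  have hHinj : Function.Injective H.mulVec :=
    mulVec_injective_of_rank_eq_card_width (by rw [hH, Fintype.card_fin])
  have hWinj : Function.Injective W.mulVec :=
    mulVec_injective_of_mul (A := Wᵀ) (by rw [hWW]; exact mulVec_injective_of_isUnit isUnit_one)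
  have hWSW : (Wᵀ * S * W).PosDef := by
    simpa only [conjTranspose_eq_transpose_of_trivial] using hS.conjTranspose_mul_mul_same hWinj
  have hHSH : (Hᵀ * S⁻¹ * H).PosDef := by
    simpa only [conjTranspose_eq_transpose_of_trivial] using hS.inv.conjTranspose_mul_mul_same hHinj
  rw [mul_inv_transpose_mul_mul_transpose_eq_inv_sub hS.isUnit hWSW.isUnit hHSH.isUnit hWH
    (by simp only [Fintype.card_fin]; omega)]

/-- Identity relating the orthogonal-complement formulation of the integrated
Kriging likelihood to the projection formulation. -/
theorem stmt_9 {n p : ℕ} (hpn : p < n)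
    (S : Matrix (Fin n) (Fin n) ℝ) (hS : S.PosDef)
    (H : Matrix (Fin n) (Fin p) ℝ) (hH : H.rank = p)
    (W : Matrix (Fin n) (Fin (n - p)) ℝ)
    (hWH : Wᵀ * H = 0) (hWW : Wᵀ * W = 1)
    (y : Fin n → ℝ) :
    y ⬝ᵥ (W * (Wᵀ * S * W)⁻¹ * Wᵀ).mulVec y
      = y ⬝ᵥ (S⁻¹ - S⁻¹ * H * (Hᵀ * S⁻¹ * H)⁻¹ * Hᵀ * S⁻¹).mulVec y :=
  stmt_9_general S hS H hH W hWH hWW y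
end

section
/- With Σ positive definite, H of full rank n×p (p < n), and W an n×(n−p) matrix satisfying WᵀH = 0 and WᵀW = I, the matrix Wᵀ Σ W is positive definite, and |Σ| · |HᵀΣ⁻¹H| = |WᵀΣW| · |HᵀH|. -/
open Matrix

/-! Put `M = [H | W]` and `N = [S⁻¹H | W]`, square after reindexing the columns. Then `MᵀM`, `NᵀSN`
and `MᵀN` are block triangular with diagonal blocks `(HᵀH, 1)`, `(HᵀS⁻¹H, WᵀSW)` and
`(HᵀS⁻¹H, 1)`, so `|M|² = |HᵀH|`, `|N|²|S| = |HᵀS⁻¹H||WᵀSW|` and `|M||N| = |HᵀS⁻¹H|`.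
Eliminating `|M|` and `|N|` gives the identity, as `|HᵀS⁻¹H| > 0`. -/

namespace Matrix

theorem mulVec_injective_iff_rank_eq_card {K m n : Type*} [Field K] [Fintype m] [Fintype n]
    {A : Matrix m n K} : Function.Injective A.mulVec ↔ A.rank = Fintype.card n := by
  rw [mulVec_injective_iff, linearIndependent_iff_card_eq_finrank_span,
    rank_eq_finrank_span_cols, eq_comm]
  rfl

theorem mulVec_injective_of_mul_eq_one {R m n : Type*} [CommSemiring R] [Fintype m] [Fintype n]
    [DecidableEq n] {A : Matrix m n R} {B : Matrix n m R} (h : B * A = 1) :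
    Function.Injective A.mulVec :=
  Function.LeftInverse.injective (g := B.mulVec) fun x => by rw [mulVec_mulVec, h, one_mulVec]

variable {R n p q : Type*} [CommRing R] [Fintype n] [DecidableEq n] [Fintype p] [DecidableEq p]
  [Fintype q] [DecidableEq q]

theorem det_fromCols_mul_det_mul_det_fromCols (e : p ⊕ q ≃ n) (A : Matrix n n R)
    (X X' : Matrix n p R) (Y Y' : Matrix n q R) :
    det ((fromCols X Y).submatrix id e.symm) * det A * det ((fromCols X' Y').submatrix id e.symm)
      = det (fromBlocks (Xᵀ * A * X') (Xᵀ * A * Y') (Yᵀ * A * X') (Yᵀ * A * Y')) := by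
  rw [← det_transpose ((fromCols X Y).submatrix id e.symm), ← det_mul, ← det_mul,
    ← det_submatrix_equiv_self e.symm, ← fromRows_mul_fromCols, ← fromRows_mul,
    ← transpose_fromCols, transpose_submatrix,
    submatrix_mul _ _ _ id _ Function.bijective_id, submatrix_mul _ _ _ id _ Function.bijective_id,
    submatrix_id_id]

theorem det_mul_det_transpose_mul_inv_mul {K : Type*} [Field K] (e : p ⊕ q ≃ n)
    {S : Matrix n n K} (hS : IsUnit S) (hSt : Sᵀ = S) {H : Matrix n p K} {W : Matrix n q K}
    (hWH : Wᵀ * H = 0) (hWW : Wᵀ * W = 1) (hK : (Hᵀ * S⁻¹ * H).det ≠ 0) :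
    S.det * (Hᵀ * S⁻¹ * H).det = (Wᵀ * S * W).det * (Hᵀ * H).det := by
  have hHW : Hᵀ * W = 0 := by simpa using congrArg transpose hWH
  have hSinvt : S⁻¹ᵀ = S⁻¹ := by rw [transpose_nonsing_inv, hSt]
  have hSS : S⁻¹ * S = 1 := nonsing_inv_mul S ((isUnit_iff_isUnit_det S).mp hS)
  set dM := det ((fromCols H W).submatrix id e.symm)
  set dN := det ((fromCols (S⁻¹ * H) W).submatrix id e.symm)
  have hMM : dM * det (1 : Matrix n n K) * dM = (Hᵀ * H).det := by
    rw [det_fromCols_mul_det_mul_det_fromCols]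
    simp [hWH, hHW, hWW]
  have hNN : dN * S.det * dN = (Hᵀ * S⁻¹ * H).det * (Wᵀ * S * W).det := by
    rw [det_fromCols_mul_det_mul_det_fromCols]
    simp [transpose_mul, hSinvt, Matrix.mul_assoc, hSS, hHW]
  have hMN : dM * det (1 : Matrix n n K) * dN = (Hᵀ * S⁻¹ * H).det := by
    rw [det_fromCols_mul_det_mul_det_fromCols]
    simp [Matrix.mul_assoc, hHW, hWW]
  rw [det_one, mul_one] at hMM hMN
  refine mul_left_cancel₀ hK ?_
  linear_combination (-(dM * dN + (Hᵀ * S⁻¹ * H).det) * S.det) * hMN + (dM * dM) * hNN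
    + ((Hᵀ * S⁻¹ * H).det * (Wᵀ * S * W).det) * hMM

end Matrix

theorem stmt_10_general {n p : ℕ}
    (S : Matrix (Fin n) (Fin n) ℝ) (hS : S.PosDef)
    (H : Matrix (Fin n) (Fin p) ℝ) (hH : H.rank = p)
    (W : Matrix (Fin n) (Fin (n - p)) ℝ)
    (hWH : Wᵀ * H = 0) (hWW : Wᵀ * W = 1) :
    (Wᵀ * S * W).PosDef ∧
    S.det * (Hᵀ * S⁻¹ * H).det = (Wᵀ * S * W).det * (Hᵀ * H).det := by
  have hpn : p ≤ n := hH ▸ H.rank_le_height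
  have hHinj : Function.Injective H.mulVec :=
    mulVec_injective_iff_rank_eq_card.mpr (by simpa using hH)
  have hWinj : Function.Injective W.mulVec := mulVec_injective_of_mul_eq_one hWW
  refine ⟨by simpa using hS.conjTranspose_mul_mul_same hWinj, ?_⟩
  refine det_mul_det_transpose_mul_inv_mul (finSumFinEquiv.trans (finCongr (by omega))) hS.isUnit
    (isHermitian_iff_isSymm.mp hS.isHermitian) hWH hWW ?_
  simpa using (hS.inv.conjTranspose_mul_mul_same hHinj).det_pos.ne'

/-- With Σ positive definite, H full rank and W an orthonormal complement of H,
WᵀΣW is positive definite and |Σ|·|HᵀΣ⁻¹H| = |WᵀΣW|·|HᵀH|. -/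
theorem stmt_10 {n p : ℕ} (hpn : p < n)
    (S : Matrix (Fin n) (Fin n) ℝ) (hS : S.PosDef)
    (H : Matrix (Fin n) (Fin p) ℝ) (hH : H.rank = p)
    (W : Matrix (Fin n) (Fin (n - p)) ℝ)
    (hWH : Wᵀ * H = 0) (hWW : Wᵀ * W = 1) :
    (Wᵀ * S * W).PosDef ∧
    S.det * (Hᵀ * S⁻¹ * H).det = (Wᵀ * S * W).det * (Hᵀ * H).det :=
  stmt_10_general S hS H hH W hWH hWW
end
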